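/- arXiv:0805.3477 — 2 statements merged into one kernel-verified Lean document; each statement's English description precedes it below -/
import Mathlib

section
/- Two irrational numbers σ, ρ ∈ (0,1) have continued fraction expansions with the same tail (i.e., there exist indices p, q such that a_{p+n}(σ) = a_{q+n}(ρ) for all n ≥ 1) if and only if there exist integers ι, λ, μ, ν with ιν − λμ = ±1 such that σ = (ιρ + λ)/(μρ + ν). -/
/-- The Gauss map: `x ↦ 1/x - ⌊1/x⌋`. -/
noncomputable def gaussMap (x : ℝ) : ℝ := Int.fract (1 / x)

/-- The `(n+1)`-st partial quotient of the continued fraction expansion of `σ`. -/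
noncomputable def cfq (σ : ℝ) (n : ℕ) : ℤ := ⌊1 / (gaussMap^[n] σ)⌋

/-!
If `s` solves `s (n+2) = s n + a n * s (n+1)`, where `a` are the partial quotients of `x`, and
`t = gaussMap^[n] x`, then `s n * t + s (n+1) = (s 0 * x + s 1) * (q n * t + q (n+1))` with `q`
the convergent denominators. For the numerators this exhibits `x` as a unimodular Möbius image
of `gaussMap^[n] x`, and in general it gives `|s n - (s 0 * x + s 1) * q n| ≤ |s 0|`, hence the
uniqueness of expansions; this is the forward direction.
Conversely, if `σ = (aρ + b)/(cρ + d)`, the same estimate shows that for large `n`,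
`σ = (A t + B)/(C t + D)` with `t = gaussMap^[n] ρ`, `0 ≤ A ≤ C`, `0 ≤ B ≤ D`, `|AD - BC| = 1`.
One Gauss step turns such a matrix into `(C - mA, D - mB; A, B)` of the same kind, since no
integer lies strictly between `C/A` and `D/B`; so Euclid's descent reaches
`gaussMap^[k] σ = gaussMap^[j] ρ`.
-/

open Set Filter Function

lemma irrational_gaussMap {x : ℝ} (hx : Irrational x) : Irrational (gaussMap x) := by
  rw [gaussMap, Int.fract, one_div]
  exact hx.inv.sub_intCast _

lemma gaussMap_mem_Ioo {x : ℝ} (hx : Irrational x) : gaussMap x ∈ Ioo 0 1 :=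
  ⟨(Int.fract_nonneg _).lt_of_ne (irrational_gaussMap hx).ne_zero.symm, Int.fract_lt_one _⟩

lemma irrational_iterate_gaussMap {x : ℝ} (hx : Irrational x) (n : ℕ) :
    Irrational (gaussMap^[n] x) := by
  induction n with
  | zero => exact hx
  | succ n ih => rw [iterate_succ_apply']; exact irrational_gaussMap ih

lemma iterate_gaussMap_mem_Ioo {x : ℝ} (hx : x ∈ Ioo 0 1) (hxi : Irrational x) (n : ℕ) :
    gaussMap^[n] x ∈ Ioo 0 1 := by
  cases n with
  | zero => exact hx
  | succ n => rw [iterate_succ_apply']; exact gaussMap_mem_Ioo (irrational_iterate_gaussMap hxi n)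

lemma cfq_add (x : ℝ) (p n : ℕ) : cfq x (p + n) = cfq (gaussMap^[p] x) n := by
  rw [cfq, cfq, add_comm, iterate_add_apply]

lemma one_le_cfq {x : ℝ} (hx : x ∈ Ioo 0 1) (hxi : Irrational x) (n : ℕ) : 1 ≤ cfq x n := by
  obtain ⟨h0, h1⟩ := iterate_gaussMap_mem_Ioo hx hxi n
  exact Int.le_floor.2 (by exact_mod_cast one_le_one_div h0 h1.le)

lemma iterate_gaussMap_mul_cfq_add {x : ℝ} (hxi : Irrational x) (n : ℕ) :
    gaussMap^[n] x * (cfq x n + gaussMap^[n + 1] x) = 1 := by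
  rw [cfq, iterate_succ_apply', gaussMap, Int.floor_add_fract,
    mul_one_div_cancel (irrational_iterate_gaussMap hxi n).ne_zero]

/-- The solution of `s (n+2) = s n + a n * s (n+1)` with `s 0 = u₀`, `s 1 = u₁`. With
`a = cfq x`, `cfSeq a 1 0` and `cfSeq a 0 1` are the numerators and denominators of the
convergents of `x`, shifted by one. -/
def cfSeq (a : ℕ → ℤ) (u₀ u₁ : ℤ) : ℕ → ℤ
  | 0 => u₀
  | 1 => u₁
  | n + 2 => cfSeq a u₀ u₁ n + a n * cfSeq a u₀ u₁ (n + 1)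

section cfSeq

variable (a : ℕ → ℤ)

@[simp] lemma cfSeq_zero (u₀ u₁ : ℤ) : cfSeq a u₀ u₁ 0 = u₀ := rfl

@[simp] lemma cfSeq_one (u₀ u₁ : ℤ) : cfSeq a u₀ u₁ 1 = u₁ := rfl

lemma cfSeq_add_two (u₀ u₁ : ℤ) (n : ℕ) :
    cfSeq a u₀ u₁ (n + 2) = cfSeq a u₀ u₁ n + a n * cfSeq a u₀ u₁ (n + 1) := rfl

lemma cfSeq_det (u₀ u₁ v₀ v₁ : ℤ) (n : ℕ) :
    cfSeq a u₀ u₁ n * cfSeq a v₀ v₁ (n + 1) - cfSeq a u₀ u₁ (n + 1) * cfSeq a v₀ v₁ n =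
      (-1) ^ n * (u₀ * v₁ - u₁ * v₀) := by
  induction n with
  | zero => simp
  | succ n ih => rw [cfSeq_add_two, cfSeq_add_two, pow_succ]; linear_combination -ih

lemma cfSeq_sub (u₀ u₁ v₀ v₁ : ℤ) (n : ℕ) :
    cfSeq a u₀ u₁ n - cfSeq a v₀ v₁ n = cfSeq a (u₀ - v₀) (u₁ - v₁) n := by
  induction n using Nat.twoStepInduction with
  | zero => rfl
  | one => rfl
  | more n ih₀ ih₁ => rw [cfSeq_add_two, cfSeq_add_two, cfSeq_add_two, ← ih₀, ← ih₁]; ring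

variable {a}

lemma monotone_cfSeq_zero_one (ha : ∀ n, 1 ≤ a n) : Monotone (cfSeq a 0 1) := by
  have h : ∀ n, 0 ≤ cfSeq a 0 1 n ∧ cfSeq a 0 1 n ≤ cfSeq a 0 1 (n + 1) := by
    intro n
    induction n with
    | zero => simp
    | succ n ih =>
      refine ⟨ih.1.trans ih.2, ?_⟩
      rw [cfSeq_add_two]
      nlinarith [ha n, ih.1, ih.2]
  exact monotone_nat_of_le_succ fun n => (h n).2

lemma le_two_mul_cfSeq_zero_one (ha : ∀ n, 1 ≤ a n) (n : ℕ) : (n : ℤ) ≤ 2 * cfSeq a 0 1 n := by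
  induction n using Nat.twoStepInduction with
  | zero => simp
  | one => simp
  | more n ih _ =>
    have h1 : 1 ≤ cfSeq a 0 1 (n + 1) := monotone_cfSeq_zero_one ha (Nat.le_add_left 1 n)
    rw [cfSeq_add_two]
    push_cast
    nlinarith [ha n]

lemma tendsto_cfSeq_zero_one (ha : ∀ n, 1 ≤ a n) :
    Tendsto (fun n => (cfSeq a 0 1 n : ℝ)) atTop atTop := by
  refine tendsto_atTop_mono (fun n => ?_) (tendsto_natCast_atTop_atTop.atTop_div_const two_pos)
  have := le_two_mul_cfSeq_zero_one ha n
  rw [div_le_iff₀ two_pos]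
  exact_mod_cast (by linarith : (n : ℤ) ≤ cfSeq a 0 1 n * 2)

end cfSeq

section Convergents

variable {x : ℝ}

lemma cfSeq_step (hxi : Irrational x) (u₀ u₁ : ℤ) (n : ℕ) :
    gaussMap^[n] x * (cfSeq (cfq x) u₀ u₁ (n + 1) * gaussMap^[n + 1] x
      + cfSeq (cfq x) u₀ u₁ (n + 2)) =
      cfSeq (cfq x) u₀ u₁ n * gaussMap^[n] x + cfSeq (cfq x) u₀ u₁ (n + 1) := by
  rw [cfSeq_add_two]
  push_cast
  linear_combination (cfSeq (cfq x) u₀ u₁ (n + 1) : ℝ) * iterate_gaussMap_mul_cfq_add hxi n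

lemma cfSeq_mul_iterate_gaussMap_add (hxi : Irrational x) (u₀ u₁ : ℤ) (n : ℕ) :
    cfSeq (cfq x) u₀ u₁ n * gaussMap^[n] x + cfSeq (cfq x) u₀ u₁ (n + 1) =
      (u₀ * x + u₁) * (cfSeq (cfq x) 0 1 n * gaussMap^[n] x + cfSeq (cfq x) 0 1 (n + 1)) := by
  induction n with
  | zero => simp
  | succ n ih =>
    refine mul_left_cancel₀ (irrational_iterate_gaussMap hxi n).ne_zero ?_
    rw [cfSeq_step hxi, mul_left_comm, cfSeq_step hxi, ih]

lemma cfSeq_zero_one_mul_iterate_gaussMap_add_pos (hx : x ∈ Ioo 0 1) (hxi : Irrational x)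
    (n : ℕ) : 0 < cfSeq (cfq x) 0 1 n * gaussMap^[n] x + cfSeq (cfq x) 0 1 (n + 1) := by
  have hq := monotone_cfSeq_zero_one (one_le_cfq hx hxi)
  have h0 : (0 : ℝ) ≤ cfSeq (cfq x) 0 1 n := by exact_mod_cast hq (Nat.zero_le n)
  have h1 : (1 : ℝ) ≤ cfSeq (cfq x) 0 1 (n + 1) := by exact_mod_cast hq (Nat.le_add_left 1 n)
  nlinarith [(iterate_gaussMap_mem_Ioo hx hxi n).1]

lemma abs_cfSeq_sub_le (hx : x ∈ Ioo 0 1) (hxi : Irrational x) (u₀ u₁ : ℤ) (n : ℕ) :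
    |cfSeq (cfq x) u₀ u₁ n - (u₀ * x + u₁) * cfSeq (cfq x) 0 1 n| ≤ |(u₀ : ℝ)| := by
  induction n with
  | zero => simp
  | succ n ih =>
    obtain ⟨ht₀, ht₁⟩ := iterate_gaussMap_mem_Ioo hx hxi n
    have hstep : (cfSeq (cfq x) u₀ u₁ (n + 1) : ℝ) - (u₀ * x + u₁) * cfSeq (cfq x) 0 1 (n + 1) =
        -gaussMap^[n] x * (cfSeq (cfq x) u₀ u₁ n - (u₀ * x + u₁) * cfSeq (cfq x) 0 1 n) := by
      linear_combination cfSeq_mul_iterate_gaussMap_add hxi u₀ u₁ n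
    rw [hstep, abs_mul, abs_neg, abs_of_pos ht₀]
    exact (mul_le_of_le_one_left (abs_nonneg _) ht₁.le).trans ih

lemma eventually_cfSeq_nonneg (hx : x ∈ Ioo 0 1) (hxi : Irrational x) {u₀ u₁ : ℤ}
    (h : 0 < u₀ * x + u₁) : ∀ᶠ n in atTop, 0 ≤ cfSeq (cfq x) u₀ u₁ n := by
  have hq := (tendsto_cfSeq_zero_one (one_le_cfq hx hxi)).const_mul_atTop h
  filter_upwards [hq.eventually_ge_atTop |(u₀ : ℝ)|] with n hn
  have := (abs_le.1 (abs_cfSeq_sub_le hx hxi u₀ u₁ n)).1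
  exact_mod_cast (by linarith : (0 : ℝ) ≤ cfSeq (cfq x) u₀ u₁ n)

end Convergents

theorem eq_of_forall_cfq_eq {x y : ℝ} (hx : x ∈ Ioo 0 1) (hxi : Irrational x)
    (hy : y ∈ Ioo 0 1) (hyi : Irrational y) (h : ∀ n, cfq x n = cfq y n) : x = y := by
  by_contra hne
  have hpos : 0 < |x - y| := abs_pos.2 (sub_ne_zero.2 hne)
  obtain ⟨n, hn⟩ :=
    ((tendsto_cfSeq_zero_one (one_le_cfq hx hxi)).eventually_gt_atTop (2 / |x - y|)).exists
  have hx' := abs_cfSeq_sub_le hx hxi 1 0 n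
  have hy' := abs_cfSeq_sub_le hy hyi 1 0 n
  rw [show cfq y = cfq x from funext fun n => (h n).symm] at hy'
  simp only [Int.cast_one, Int.cast_zero, one_mul, add_zero, abs_one] at hx' hy'
  have hq : (0 : ℝ) ≤ cfSeq (cfq x) 0 1 n :=
    by exact_mod_cast monotone_cfSeq_zero_one (one_le_cfq hx hxi) (Nat.zero_le n)
  have : |x - y| * cfSeq (cfq x) 0 1 n ≤ 2 := by
    rw [← abs_of_nonneg hq, ← abs_mul]
    calc |(x - y) * cfSeq (cfq x) 0 1 n|
        = |(cfSeq (cfq x) 1 0 n - y * cfSeq (cfq x) 0 1 n)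
            - (cfSeq (cfq x) 1 0 n - x * cfSeq (cfq x) 0 1 n)| := by congr 1; ring
      _ ≤ 2 := (abs_sub _ _).trans (by linarith)
  rw [div_lt_iff₀ hpos] at hn
  linarith

def MobiusEquiv (σ ρ : ℝ) : Prop :=
  ∃ a b c d : ℤ, |a * d - b * c| = 1 ∧ (c : ℝ) * ρ + d ≠ 0 ∧ σ = (a * ρ + b) / (c * ρ + d)

lemma mobiusEquiv_iff {σ ρ : ℝ} : MobiusEquiv σ ρ ↔
    ∃ a b c d : ℤ, (a * d - b * c = 1 ∨ a * d - b * c = -1) ∧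
      (c : ℝ) * ρ + d ≠ 0 ∧ σ = (a * ρ + b) / (c * ρ + d) := by
  simp only [MobiusEquiv, abs_eq zero_le_one]

namespace MobiusEquiv

variable {σ ρ τ : ℝ}

lemma symm (h : MobiusEquiv σ ρ) : MobiusEquiv ρ σ := by
  obtain ⟨a, b, c, d, hdet, hden, heq⟩ := h
  have hσ : σ * (c * ρ + d) = a * ρ + b := by rw [heq, div_mul_cancel₀ _ hden]
  have hden' : ((-c : ℤ) : ℝ) * σ + a = (a * d - b * c : ℤ) / (c * ρ + d) := by
    rw [eq_div_iff hden]
    push_cast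
    linear_combination (-c : ℝ) * hσ
  have hdet₀ : ((a * d - b * c : ℤ) : ℝ) ≠ 0 := by
    rw [Int.cast_ne_zero]
    rintro h0
    simp [h0] at hdet
  refine ⟨d, -b, -c, a, by rw [← hdet]; ring_nf, ?_, ?_⟩
  · rw [hden']
    exact div_ne_zero hdet₀ hden
  · rw [eq_div_iff (hden' ▸ div_ne_zero hdet₀ hden)]
    push_cast
    linear_combination -hσ

lemma trans (h₁ : MobiusEquiv σ ρ) (h₂ : MobiusEquiv ρ τ) : MobiusEquiv σ τ := by
  obtain ⟨a, b, c, d, hdet₁, hden₁, heq₁⟩ := h₁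
  obtain ⟨e, f, g, h, hdet₂, hden₂, heq₂⟩ := h₂
  have hρ : ρ * (g * τ + h) = e * τ + f := by rw [heq₂, div_mul_cancel₀ _ hden₂]
  have hnum : ((a * e + b * g : ℤ) : ℝ) * τ + (a * f + b * h : ℤ) =
      (a * ρ + b) * (g * τ + h) := by
    push_cast
    linear_combination -(a : ℝ) * hρ
  have hden : ((c * e + d * g : ℤ) : ℝ) * τ + (c * f + d * h : ℤ) =
      (c * ρ + d) * (g * τ + h) := by
    push_cast
    linear_combination -(c : ℝ) * hρ
  refine ⟨a * e + b * g, a * f + b * h, c * e + d * g, c * f + d * h, ?_, ?_, ?_⟩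
  · rw [show (a * e + b * g) * (c * f + d * h) - (a * f + b * h) * (c * e + d * g) =
      (a * d - b * c) * (e * h - f * g) by ring, abs_mul, hdet₁, hdet₂, one_mul]
  · rw [hden]
    exact mul_ne_zero hden₁ hden₂
  · rw [hnum, hden, mul_div_mul_right _ _ hden₂, heq₁]

end MobiusEquiv

lemma mobiusEquiv_iterate_gaussMap {x : ℝ} (hx : x ∈ Ioo 0 1) (hxi : Irrational x) (n : ℕ) :
    MobiusEquiv x (gaussMap^[n] x) := by
  have hpos := cfSeq_zero_one_mul_iterate_gaussMap_add_pos hx hxi n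
  refine ⟨cfSeq (cfq x) 1 0 n, cfSeq (cfq x) 1 0 (n + 1), cfSeq (cfq x) 0 1 n,
    cfSeq (cfq x) 0 1 (n + 1), by simp [cfSeq_det, abs_pow], hpos.ne', ?_⟩
  rw [cfSeq_mul_iterate_gaussMap_add hxi, mul_div_cancel_right₀ _ hpos.ne']
  simp

theorem mobiusEquiv_of_cfq_tail_eq {σ ρ : ℝ} (hσ : σ ∈ Ioo 0 1) (hσi : Irrational σ)
    (hρ : ρ ∈ Ioo 0 1) (hρi : Irrational ρ)
    (h : ∃ p q : ℕ, ∀ n : ℕ, 1 ≤ n → cfq σ (p + n) = cfq ρ (q + n)) : MobiusEquiv σ ρ := by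
  obtain ⟨p, q, h⟩ := h
  have htail : gaussMap^[p + 1] σ = gaussMap^[q + 1] ρ := by
    refine eq_of_forall_cfq_eq (iterate_gaussMap_mem_Ioo hσ hσi _)
      (irrational_iterate_gaussMap hσi _) (iterate_gaussMap_mem_Ioo hρ hρi _)
      (irrational_iterate_gaussMap hρi _) fun n => ?_
    rw [← cfq_add, ← cfq_add, add_assoc, add_assoc]
    exact h (1 + n) (Nat.le_add_right 1 n)
  exact (mobiusEquiv_iterate_gaussMap hσ hσi (p + 1)).trans
    (htail ▸ (mobiusEquiv_iterate_gaussMap hρ hρi (q + 1)).symm)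

lemma nonneg_of_mul_add_nonneg {X Y A B : ℤ} {t : ℝ} (ht : 0 < t) (hA : 1 ≤ A) (hB : 1 ≤ B)
    (hdet : |X * B - Y * A| ≤ 1) (h : 0 ≤ X * t + Y) : 0 ≤ X ∧ 0 ≤ Y := by
  obtain ⟨hdet₁, hdet₂⟩ := abs_le.1 hdet
  constructor
  · by_contra! hX
    have hY : 0 < Y := by
      have : (X : ℝ) * t < 0 := mul_neg_of_neg_of_pos (by exact_mod_cast hX) ht
      exact_mod_cast (by linarith : (0 : ℝ) < Y)
    nlinarith
  · by_contra! hY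
    have hX : 0 < X := by
      have : (Y : ℝ) < 0 := by exact_mod_cast hY
      exact_mod_cast pos_of_mul_pos_left (by linarith : (0 : ℝ) < X * t) ht.le
    nlinarith

lemma gaussMap_one_div_add_intCast {t : ℝ} (ht : t ∈ Ico 0 1) (D : ℤ) :
    gaussMap (1 / (t + D)) = t := by
  rw [gaussMap, one_div_one_div, Int.fract_add_intCast, Int.fract_eq_self.2 ht]

lemma gaussMap_div_intCast_mul_add_one {t : ℝ} (ht : t ≠ 0) (C : ℤ) :
    gaussMap (t / (C * t + 1)) = gaussMap t := by
  rw [gaussMap, gaussMap, one_div_div, add_div, mul_div_cancel_right₀ _ ht, Int.fract_intCast_add]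

lemma gaussMap_mobius {t : ℝ} {A B C D : ℤ} (hpos : 0 < A * t + B) :
    gaussMap ((A * t + B) / (C * t + D)) =
      (((C - ⌊(C * t + D) / (A * t + B)⌋ * A : ℤ) : ℝ) * t +
        (D - ⌊(C * t + D) / (A * t + B)⌋ * B : ℤ)) / (A * t + B) := by
  rw [gaussMap, one_div_div, Int.fract, eq_div_iff hpos.ne', sub_mul, div_mul_cancel₀ _ hpos.ne']
  push_cast
  ring

theorem exists_iterate_gaussMap_eq {t : ℝ} (ht : t ∈ Ioo 0 1) {A B C D : ℤ} (hA : 0 ≤ A)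
    (hB : 0 ≤ B) (hAC : A ≤ C) (hBD : B ≤ D) (hdet : |A * D - B * C| = 1) :
    ∃ k j : ℕ, gaussMap^[k] ((A * t + B) / (C * t + D)) = gaussMap^[j] t := by
  obtain rfl | hA := hA.eq_or_lt
  · have hBC : B * C = 1 := by simpa [abs_of_nonneg (mul_nonneg hB hAC)] using hdet
    obtain rfl := Int.eq_one_of_mul_eq_one_right hB hBC
    obtain rfl := Int.eq_one_of_mul_eq_one_left hAC hBC
    exact ⟨1, 0, by simpa using gaussMap_one_div_add_intCast (Ioo_subset_Ico_self ht) D⟩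
  obtain rfl | hB := hB.eq_or_lt
  · have hAD : A * D = 1 := by simpa [abs_of_nonneg (mul_nonneg hA.le hBD)] using hdet
    obtain rfl := Int.eq_one_of_mul_eq_one_right hA.le hAD
    obtain rfl := Int.eq_one_of_mul_eq_one_left hBD hAD
    exact ⟨1, 1, by simpa using gaussMap_div_intCast_mul_add_one ht.1.ne' C⟩
  have hpos : (0 : ℝ) < A * t + B :=
    add_pos (mul_pos (by exact_mod_cast hA) ht.1) (by exact_mod_cast hB)
  set m := ⌊(C * t + D) / (A * t + B)⌋
  -- `m ≤ (C t + D)/(A t + B) < m + 1` forces `0 ≤ C - m A ≤ A` and `0 ≤ D - m B ≤ B`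
  have hlo : (0 : ℝ) ≤ ((C - m * A : ℤ) : ℝ) * t + (D - m * B : ℤ) := by
    have := (le_div_iff₀ hpos).1 (Int.floor_le ((C * t + D) / (A * t + B)))
    push_cast
    linarith
  have hhi : (0 : ℝ) ≤ ((A - (C - m * A) : ℤ) : ℝ) * t + (B - (D - m * B) : ℤ) := by
    have := (div_lt_iff₀ hpos).1 (Int.lt_floor_add_one ((C * t + D) / (A * t + B)))
    push_cast
    linarith
  have hdet' : |(C - m * A) * B - (D - m * B) * A| = 1 := by
    rw [← hdet, ← abs_neg]; ring_nf
  obtain ⟨hX, hY⟩ := nonneg_of_mul_add_nonneg ht.1 hA hB hdet'.le hlo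
  obtain ⟨hX', hY'⟩ := nonneg_of_mul_add_nonneg ht.1 hA hB
    (le_of_eq (by rw [← hdet', ← abs_neg]; ring_nf)) hhi
  have hlt : A + B < C + D := by
    refine (add_le_add hAC hBD).lt_of_ne fun hsum => ?_
    obtain ⟨rfl, rfl⟩ : A = C ∧ B = D := by omega
    simp [mul_comm] at hdet
  obtain ⟨k, j, hkj⟩ :=
    exists_iterate_gaussMap_eq ht hX hY (by linarith) (by linarith) hdet'
  exact ⟨k + 1, j, by rw [iterate_succ_apply, gaussMap_mobius hpos, hkj]⟩
termination_by (C + D).toNat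
decreasing_by omega

theorem exists_iterate_gaussMap_eq_of_mobius {σ ρ : ℝ} (hσ : σ ∈ Ioo 0 1) (hρ : ρ ∈ Ioo 0 1)
    (hρi : Irrational ρ) {a b c d : ℤ} (hdet : |a * d - b * c| = 1) (hpos : 0 < c * ρ + d)
    (heq : σ = (a * ρ + b) / (c * ρ + d)) : ∃ k j : ℕ, gaussMap^[k] σ = gaussMap^[j] ρ := by
  have hnum : a * ρ + b = σ * (c * ρ + d) := by rw [heq, div_mul_cancel₀ _ hpos.ne']
  have hα : (0 : ℝ) < a * ρ + b := hnum ▸ mul_pos hσ.1 hpos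
  have hβα : (0 : ℝ) < ((c - a : ℤ) : ℝ) * ρ + (d - b : ℤ) := by
    push_cast
    nlinarith [hσ.2]
  obtain ⟨N, hN⟩ := ((eventually_cfSeq_nonneg hρ hρi hα).and
    (eventually_cfSeq_nonneg hρ hρi hβα)).exists_forall_of_atTop
  have hle : ∀ n ≥ N, 0 ≤ cfSeq (cfq ρ) a b n ∧ cfSeq (cfq ρ) a b n ≤ cfSeq (cfq ρ) c d n :=
    fun n hn => ⟨(hN n hn).1, by linarith [(hN n hn).2, cfSeq_sub (cfq ρ) c d a b n]⟩
  have hσN : σ = (cfSeq (cfq ρ) a b N * gaussMap^[N] ρ + cfSeq (cfq ρ) a b (N + 1)) /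
      (cfSeq (cfq ρ) c d N * gaussMap^[N] ρ + cfSeq (cfq ρ) c d (N + 1)) := by
    rw [cfSeq_mul_iterate_gaussMap_add hρi a b, cfSeq_mul_iterate_gaussMap_add hρi c d,
      mul_div_mul_right _ _ (cfSeq_zero_one_mul_iterate_gaussMap_add_pos hρ hρi N).ne', heq]
  obtain ⟨k, j, hkj⟩ := exists_iterate_gaussMap_eq (iterate_gaussMap_mem_Ioo hρ hρi N)
    (hle N le_rfl).1 (hle (N + 1) N.le_succ).1 (hle N le_rfl).2 (hle (N + 1) N.le_succ).2
    (by rw [cfSeq_det, abs_mul, abs_pow, abs_neg, abs_one, one_pow, one_mul, hdet])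
  exact ⟨k, j + N, by rw [hσN, hkj, iterate_add_apply]⟩

theorem cfq_tail_eq_of_mobiusEquiv {σ ρ : ℝ} (hσ : σ ∈ Ioo 0 1) (hρ : ρ ∈ Ioo 0 1)
    (hρi : Irrational ρ) (h : MobiusEquiv σ ρ) :
    ∃ p q : ℕ, ∀ n : ℕ, 1 ≤ n → cfq σ (p + n) = cfq ρ (q + n) := by
  obtain ⟨a, b, c, d, hdet, hden, heq⟩ := h
  obtain ⟨k, j, hkj⟩ : ∃ k j : ℕ, gaussMap^[k] σ = gaussMap^[j] ρ := by
    rcases hden.lt_or_gt with hneg | hpos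
    · refine exists_iterate_gaussMap_eq_of_mobius hσ hρ hρi (a := -a) (b := -b) (c := -c)
        (d := -d) (by rw [← hdet]; ring_nf) (by push_cast; linarith) ?_
      rw [heq, ← neg_div_neg_eq]
      push_cast
      ring
    · exact exists_iterate_gaussMap_eq_of_mobius hσ hρ hρi hdet hpos heq
  exact ⟨k, j, fun n _ => by rw [cfq_add, cfq_add, hkj]⟩

/-- Two irrationals `σ, ρ ∈ (0,1)` have continued fraction expansions with the
same tail iff `σ = (ιρ + λ)/(μρ + ν)` for integers with `ιν − λμ = ±1`. -/
theorem stmt2 (σ ρ : ℝ) (hσ : σ ∈ Set.Ioo (0:ℝ) 1) (hρ : ρ ∈ Set.Ioo (0:ℝ) 1)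
    (hσi : Irrational σ) (hρi : Irrational ρ) :
    (∃ p q : ℕ, ∀ n : ℕ, 1 ≤ n → cfq σ (p + n) = cfq ρ (q + n)) ↔
      (∃ ι lam μ ν : ℤ, (ι * ν - lam * μ = 1 ∨ ι * ν - lam * μ = -1) ∧
        (μ:ℝ) * ρ + (ν:ℝ) ≠ 0 ∧ σ = ((ι:ℝ) * ρ + (lam:ℝ)) / ((μ:ℝ) * ρ + (ν:ℝ))) := by
  rw [← mobiusEquiv_iff]
  exact ⟨mobiusEquiv_of_cfq_tail_eq hσ hσi hρ hρi, cfq_tail_eq_of_mobiusEquiv hσ hρ hρi⟩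
end

section
/- Suppose χ : ℝ/ℤ → ℂ is continuous, σ ∈ (0,1) is irrational, c = χ(0), f ∘ χ (t) = χ(t+σ), and Q_m is a sequence of positive integers with Q_m σ mod 1 → 0 at rate C₁ σ₀^m (i.e., dist(Q_m σ, ℤ) = C₁σ₀^m + o(σ₀^m) with C₁ > 0, 0 < σ₀ < 1), while |f^{Q_m}(c) − c| = C₂|α|^m + o(|α|^m) with C₂ > 0 and 0 < |α| < 1. If χ is κ-Hölder with κ ∈ (0,1), then κ ≤ log|α| / log σ₀. -/
open Complex Filter

instance : Fact ((0:ℝ) < 1) := ⟨one_pos⟩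

/-! The conjugacy turns `f^[Q m] c - c` into `χ (Q m σ) - χ 0`, so Hölder continuity gives
`C₂ ‖α‖^m ≲ C (C₁ σ₀^m)^κ`. If `σ₀^κ < ‖α‖`, dividing by `‖α‖^m` leaves a factor
`(σ₀^κ / ‖α‖)^m → 0`, contradicting `C₂ > 0`; hence `‖α‖ ≤ σ₀^κ`, which is the claim after
taking logarithms (note `log σ₀ < 0`). -/

lemma AddCircle.norm_coe_one (x : ℝ) : ‖(x : AddCircle (1:ℝ))‖ = |x - round x| := by
  simp [AddCircle.norm_eq]

lemma iterate_apply_eq_of_apply_eq_add {M β : Type*} [AddMonoid M] {f : β → β} {χ : M → β}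
    {a : M} (h : ∀ t, f (χ t) = χ (t + a)) (n : ℕ) (t : M) :
    f^[n] (χ t) = χ (t + n • a) := by
  have hsemi : Function.Semiconj χ (· + a) f := fun t => (h t).symm
  rw [← hsemi.iterate_right n t, add_right_iterate]

lemma le_rpow_of_le_mul_rpow {a b : ℕ → ℝ} {C C₁ C₂ r s κ : ℝ} (hr : 0 < r) (hs : 0 < s)
    (hC₁ : C₁ ≠ 0) (hC₂ : 0 < C₂) (hb : ∀ m, 0 ≤ b m)
    (hab : ∀ m, a m ≤ C * b m ^ κ)
    (ha : Tendsto (fun m => a m / r ^ m) atTop (nhds C₂))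
    (hb' : Tendsto (fun m => b m / s ^ m) atTop (nhds C₁)) :
    r ≤ s ^ κ := by
  by_contra! hlt
  set q := s ^ κ / r
  have hq : q < 1 := (div_lt_one hr).2 hlt
  have hbound : ∀ m, a m / r ^ m ≤ C * (b m / s ^ m) ^ κ * q ^ m := by
    intro m
    calc a m / r ^ m ≤ C * b m ^ κ / r ^ m := div_le_div_of_nonneg_right (hab m) (by positivity)
      _ = C * (b m / s ^ m) ^ κ * q ^ m := by
        rw [Real.div_rpow (hb m) (pow_nonneg hs.le m), ← Real.rpow_pow_comm hs.le, div_pow]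
        have : 0 < (s ^ κ) ^ m := pow_pos (Real.rpow_pos_of_pos hs κ) m
        field_simp
  have hlim : Tendsto (fun m => C * (b m / s ^ m) ^ κ * q ^ m) atTop (nhds 0) := by
    have hgeom := tendsto_pow_atTop_nhds_zero_of_lt_one (by positivity) hq
    simpa using (tendsto_const_nhds.mul (hb'.rpow_const (Or.inl hC₁))).mul hgeom
  exact hC₂.not_ge (le_of_tendsto_of_tendsto' ha hlim hbound)

theorem stmt12_general (f : ℂ → ℂ)
    (χ : AddCircle (1:ℝ) → ℂ)
    (σ : ℝ)
    (c : ℂ) (hc : c = χ 0)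
    (hconj : ∀ t : AddCircle (1:ℝ), f (χ t) = χ (t + (σ : AddCircle (1:ℝ))))
    (Q : ℕ → ℕ)
    (C₁ C₂ σ₀ : ℝ) (hC₁ : 0 < C₁) (hC₂ : 0 < C₂)
    (hσ₀ : σ₀ ∈ Set.Ioo (0:ℝ) 1)
    (α : ℂ) (hα₀ : 0 < ‖α‖)
    (hrate1 : Tendsto
      (fun m : ℕ => |(Q m : ℝ) * σ - (round ((Q m : ℝ) * σ) : ℝ)| / σ₀ ^ m)
      atTop (nhds C₁))
    (hrate2 : Tendsto
      (fun m : ℕ => ‖f^[Q m] c - c‖ / ‖α‖ ^ m)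
      atTop (nhds C₂))
    (κ : ℝ)
    (hHolder : ∃ C : ℝ, 0 < C ∧ ∀ t s : AddCircle (1:ℝ),
      ‖χ t - χ s‖ ≤ C * dist t s ^ κ) :
    κ ≤ Real.log ‖α‖ / Real.log σ₀ := by
  obtain ⟨C, -, hH⟩ := hHolder
  obtain ⟨hσ₀0, hσ₀1⟩ := hσ₀
  have hreturn : ∀ m, ‖f^[Q m] c - c‖ ≤ C * |(Q m : ℝ) * σ - round ((Q m : ℝ) * σ)| ^ κ := by
    intro m
    have h := hH (Q m • (σ : AddCircle (1:ℝ))) 0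
    rwa [← zero_add (Q m • _), ← iterate_apply_eq_of_apply_eq_add hconj, ← hc, dist_zero_right,
      zero_add, ← AddCircle.coe_nsmul, nsmul_eq_mul, AddCircle.norm_coe_one] at h
  have hle : ‖α‖ ≤ σ₀ ^ κ :=
    le_rpow_of_le_mul_rpow hα₀ hσ₀0 hC₁.ne' hC₂ (fun _ => abs_nonneg _) hreturn hrate2 hrate1
  rw [le_div_iff_of_neg (Real.log_neg hσ₀0 hσ₀1), ← Real.log_rpow hσ₀0]
  exact Real.log_le_log hα₀ hle

/-- Upper bound on the Hölder regularity of the conjugacy in terms of the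
scaling exponents: if closest returns of the rotation scale like `C₁σ₀^m`
while closest returns of the orbit of `c = χ(0)` scale like `C₂|α|^m`, and
`χ` is `κ`-Hölder, then `κ ≤ log|α|/log σ₀`. -/
theorem stmt12 (f : ℂ → ℂ) (hfc : Continuous f)
    (χ : AddCircle (1:ℝ) → ℂ) (hχ : Continuous χ)
    (σ : ℝ) (hσ : σ ∈ Set.Ioo (0:ℝ) 1) (hirr : Irrational σ)
    (c : ℂ) (hc : c = χ 0)
    (hconj : ∀ t : AddCircle (1:ℝ), f (χ t) = χ (t + (σ : AddCircle (1:ℝ))))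
    (Q : ℕ → ℕ) (hQ : ∀ m, 0 < Q m)
    (C₁ C₂ σ₀ : ℝ) (hC₁ : 0 < C₁) (hC₂ : 0 < C₂)
    (hσ₀ : σ₀ ∈ Set.Ioo (0:ℝ) 1)
    (α : ℂ) (hα₀ : 0 < ‖α‖) (hα₁ : ‖α‖ < 1)
    (hrate1 : Tendsto
      (fun m : ℕ => |(Q m : ℝ) * σ - (round ((Q m : ℝ) * σ) : ℝ)| / σ₀ ^ m)
      atTop (nhds C₁))
    (hrate2 : Tendsto
      (fun m : ℕ => ‖f^[Q m] c - c‖ / ‖α‖ ^ m)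
      atTop (nhds C₂))
    (κ : ℝ) (hκ : κ ∈ Set.Ioo (0:ℝ) 1)
    (hHolder : ∃ C : ℝ, 0 < C ∧ ∀ t s : AddCircle (1:ℝ),
      ‖χ t - χ s‖ ≤ C * dist t s ^ κ) :
    κ ≤ Real.log ‖α‖ / Real.log σ₀ :=
  stmt12_general f χ σ c hc hconj Q C₁ C₂ σ₀ hC₁ hC₂ hσ₀ α hα₀ hrate1 hrate2 κ hHolder
end
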